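/- Let (Q, R̃) and (Q̃, R) be two complete hereditary cotorsion pairs in an abelian category A such that Q̃ ⊆ Q and Q ∩ R̃ = Q̃ ∩ R. If every object of A has finite Q-resolution dimension (with a common finite bound, i.e. sup over all objects is finite), then (Q, W, R) is a Hovey triple, where W is the class of objects with finite Q̃-resolution dimension. That is, W is thick and (Q, W ∩ R) = (Q, R̃) and (Q ∩ W, R) = (Q̃, R) are complete cotorsion pairs; in particular Q ∩ W = Q̃ and W ∩ R = R̃. -/

import Mathlib

open CategoryTheory Limits

universe w v u

namespace PaperAB

variable {C : Type u} [Category.{v} C] [Abelian C] [HasExt.{w} C]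

/-- Vanishing of `Ext^n(A, B)`. -/
def extZero (A B : C) (n : ℕ) : Prop := Subsingleton (Abelian.Ext A B n)

/-- The right `Ext^1`-orthogonal class of a class `𝒳`. -/
def rightOrth (𝒳 : C → Prop) : C → Prop := fun B => ∀ A, 𝒳 A → extZero A B 1

/-- The left `Ext^1`-orthogonal class of a class `𝒴`. -/
def leftOrth (𝒴 : C → Prop) : C → Prop := fun A => ∀ B, 𝒴 B → extZero A B 1

/-- `f, g` form a short exact sequence `0 → A → B → D → 0`. -/
def IsSES {A B D : C} (f : A ⟶ B) (g : B ⟶ D) : Prop :=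
  ∃ (zero : f ≫ g = 0), (ShortComplex.mk f g zero).ShortExact

/-- `(𝒳, 𝒴)` is a cotorsion pair. -/
structure CotorsionPair (𝒳 𝒴 : C → Prop) : Prop where
  eqLeft : ∀ A, 𝒳 A ↔ leftOrth 𝒴 A
  eqRight : ∀ B, 𝒴 B ↔ rightOrth 𝒳 B

/-- Completeness of a pair of classes `(𝒳, 𝒴)`: every object admits a special
`𝒳`-precover and a special `𝒴`-preenvelope. -/
def Complete (𝒳 𝒴 : C → Prop) : Prop :=
  ∀ A : C,
    (∃ (Y X : C) (f : Y ⟶ X) (g : X ⟶ A), IsSES f g ∧ 𝒳 X ∧ 𝒴 Y) ∧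
    (∃ (Y X : C) (f : A ⟶ Y) (g : Y ⟶ X), IsSES f g ∧ 𝒴 Y ∧ 𝒳 X)

/-- Heredity: `Ext^n(𝒳, 𝒴) = 0` for all `n ≥ 1`. -/
def Hereditary (𝒳 𝒴 : C → Prop) : Prop :=
  ∀ A B, 𝒳 A → 𝒴 B → ∀ n, 1 ≤ n → extZero A B n

/-- Complete hereditary cotorsion pair. -/
structure CHCP (𝒳 𝒴 : C → Prop) : Prop where
  cotorsion : CotorsionPair 𝒳 𝒴
  complete : Complete 𝒳 𝒴
  hereditary : Hereditary 𝒳 𝒴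

/-- `ResDimLE 𝒳 A n` : there exists an exact sequence
`0 → X n → ⋯ → X 0 → A → 0` with all `X i ∈ 𝒳`. -/
def ResDimLE (𝒳 : C → Prop) (A : C) (n : ℕ) : Prop :=
  ∃ (X : ℕ → C) (d : ∀ i, X (i + 1) ⟶ X i) (ε : X 0 ⟶ A),
    (∀ i, i ≤ n → 𝒳 (X i)) ∧ (∀ i, n < i → IsZero (X i)) ∧ Epi ε ∧
    (∃ (zero : d 0 ≫ ε = 0), (ShortComplex.mk (d 0) ε zero).Exact) ∧
    (∀ i, ∃ (zero : d (i + 1) ≫ d i = 0),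
      (ShortComplex.mk (d (i + 1)) (d i) zero).Exact)

/-- Objects of finite `𝒳`-resolution dimension (the class `X̂`). -/
def FinResDim (𝒳 : C → Prop) (A : C) : Prop := ∃ n, ResDimLE 𝒳 A n

/-- The `𝒳`-resolution dimension of `A`, in `ℕ∞`. -/
noncomputable def ResDim (𝒳 : C → Prop) (A : C) : ℕ∞ :=
  sInf {m : ℕ∞ | ∃ n : ℕ, m = (n : ℕ∞) ∧ ResDimLE 𝒳 A n}

/-- The intersection of two classes. -/
def Inter (𝒳 𝒴 : C → Prop) : C → Prop := fun A => 𝒳 A ∧ 𝒴 A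

def ClosedUnderExtensions (𝒲 : C → Prop) : Prop :=
  ∀ ⦃A B D : C⦄ (f : A ⟶ B) (g : B ⟶ D), IsSES f g → 𝒲 A → 𝒲 D → 𝒲 B

def ClosedUnderKernels (𝒲 : C → Prop) : Prop :=
  ∀ ⦃A B D : C⦄ (f : A ⟶ B) (g : B ⟶ D), IsSES f g → 𝒲 B → 𝒲 D → 𝒲 A

def ClosedUnderCokernels (𝒲 : C → Prop) : Prop :=
  ∀ ⦃A B D : C⦄ (f : A ⟶ B) (g : B ⟶ D), IsSES f g → 𝒲 A → 𝒲 B → 𝒲 D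

def ClosedUnderSummands (𝒲 : C → Prop) : Prop :=
  ∀ ⦃A B : C⦄ (i : A ⟶ B) (p : B ⟶ A), i ≫ p = 𝟙 A → 𝒲 B → 𝒲 A

/-- A class is thick if it is closed under direct summands and has the
two-out-of-three property on short exact sequences. -/
def IsThick (𝒲 : C → Prop) : Prop :=
  ClosedUnderSummands 𝒲 ∧ ClosedUnderExtensions 𝒲 ∧
    ClosedUnderKernels 𝒲 ∧ ClosedUnderCokernels 𝒲

/-- A class is left thick if it is closed under direct summands, extensions and
kernels of epimorphisms. -/
def LeftThick (𝒲 : C → Prop) : Prop :=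
  ClosedUnderSummands 𝒲 ∧ ClosedUnderExtensions 𝒲 ∧ ClosedUnderKernels 𝒲

/-- A class is right thick if it is closed under direct summands, extensions and
cokernels of monomorphisms. -/
def RightThick (𝒲 : C → Prop) : Prop :=
  ClosedUnderSummands 𝒲 ∧ ClosedUnderExtensions 𝒲 ∧ ClosedUnderCokernels 𝒲

/-- `ω` is a cogenerator for `𝒳`. -/
def IsCogeneratorFor (ω 𝒳 : C → Prop) : Prop :=
  (∀ A, ω A → 𝒳 A) ∧
  ∀ A, 𝒳 A → ∃ (W A' : C) (f : A ⟶ W) (g : W ⟶ A'), IsSES f g ∧ ω W ∧ 𝒳 A'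

/-- `ω` is an injective cogenerator for `𝒳`. -/
def IsInjCogeneratorFor (ω 𝒳 : C → Prop) : Prop :=
  IsCogeneratorFor ω 𝒳 ∧ ∀ A W, 𝒳 A → ω W → ∀ n, 1 ≤ n → extZero A W n

/-- A left weak Auslander–Buchweitz context `(𝒳, 𝒴, ω)`. -/
structure LeftWeakABContext (𝒳 𝒴 ω : C → Prop) : Prop where
  ab1 : LeftThick 𝒳
  ab2 : RightThick 𝒴
  ab2' : ∀ A, 𝒴 A → FinResDim 𝒳 A
  ab3 : (∀ A, ω A ↔ 𝒳 A ∧ 𝒴 A) ∧ IsInjCogeneratorFor ω 𝒳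

/-- A left Auslander–Buchweitz context: a left weak AB-context in which every
object has finite `𝒳`-resolution dimension. -/
structure LeftABContext (𝒳 𝒴 ω : C → Prop) extends LeftWeakABContext 𝒳 𝒴 ω : Prop where
  hat_all : ∀ A : C, FinResDim 𝒳 A

end PaperAB

/-!
`W`, the class of objects of finite `Q̃`-resolution dimension, is described through Ext:
for a complete hereditary cotorsion pair `(𝒳, 𝒴)`, `A` has `𝒳`-resolution dimension
`≤ m` iff `Ext^i(A, 𝒴) = 0` for `i > m`. Thickness of `W` is then the long exact Ext
sequence. An object of `Q` with `Ext^{>m}(A, R) = 0` lies in `Q̃`: resolving `B ∈ R` by a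
special `Q̃`-precover whose middle term lies in `Q̃ ∩ R = Q ∩ R̃` shifts the vanishing
down one degree at a time. Objects of `R̃` lie in `W`: iterating special `Q`-precovers
gives a `Q ∩ R̃ = Q̃ ∩ R`-resolution whose `n`-th syzygy lies in `Q`, by the uniform bound.
Finally, for `B ∈ W ∩ R` the special `R̃`-preenvelope `0 → B → R' → Q' → 0` has
`Q' ∈ Q ∩ W = Q̃`, so it splits and `B` is a summand of `R' ∈ R̃`.
-/

namespace PaperAB

open Abelian ZeroObject

variable {C : Type u} [Category.{v} C] [Abelian C]

section Resolutions

lemma exact_mk_precomp_epi {E A B D : C} (p : E ⟶ A) [Epi p] {f : A ⟶ B} {g : B ⟶ D}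
    {w : f ≫ g = 0} (h : (ShortComplex.mk f g w).Exact) (w' : (p ≫ f) ≫ g = 0) :
    (ShortComplex.mk (p ≫ f) g w').Exact :=
  (ShortComplex.exact_iff_of_epi_of_isIso_of_mono
    (S₁ := ShortComplex.mk (p ≫ f) g w') (S₂ := ShortComplex.mk f g w)
    { τ₁ := p, τ₂ := 𝟙 _, τ₃ := 𝟙 _ }).2 h

lemma exact_mk_comp_mono_iff {A B D D' : C} (m : D ⟶ D') [Mono m] {f : A ⟶ B} {g : B ⟶ D}
    {g' : B ⟶ D'} (hg : g ≫ m = g') (w : f ≫ g = 0) (w' : f ≫ g' = 0) :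
    (ShortComplex.mk f g' w').Exact ↔ (ShortComplex.mk f g w).Exact := by
  subst hg
  exact (ShortComplex.exact_iff_of_epi_of_isIso_of_mono
    (S₁ := ShortComplex.mk f g w) (S₂ := ShortComplex.mk f (g ≫ m) w')
    { τ₁ := 𝟙 _, τ₂ := 𝟙 _, τ₃ := m }).symm

variable {𝒳 : C → Prop}

lemma resDimLE_zero_of_mem {A : C} (hA : 𝒳 A) : ResDimLE 𝒳 A 0 := by
  refine ⟨fun i => Nat.casesOn i A fun _ => 0, fun _ => 0, 𝟙 A, ?_, ?_, inferInstance, ?_,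
    ?_⟩
  · intro i hi
    obtain rfl : i = 0 := by omega
    exact hA
  · rintro (_ | _) hi
    · omega
    · exact isZero_zero C
  · exact ⟨by simp, (ShortComplex.exact_iff_mono _ rfl).2 inferInstance⟩
  · exact fun i => ⟨by simp, ShortComplex.exact_of_isZero_X₂ _ (isZero_zero C)⟩

lemma ResDimLE.exists_iso_of_zero {A : C} (h : ResDimLE 𝒳 A 0) :
    ∃ X, 𝒳 X ∧ Nonempty (X ≅ A) := by
  obtain ⟨X, d, ε, hmem, hzero, hepi, ⟨_, hexact⟩, -⟩ := h
  have : Mono ε := (ShortComplex.exact_iff_mono _ ((hzero 1 one_pos).eq_of_src _ _)).1 hexact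
  have : IsIso ε := isIso_of_mono_of_epi ε
  exact ⟨X 0, hmem 0 le_rfl, ⟨asIso ε⟩⟩

lemma ResDimLE.exists_isSES_of_succ {A : C} {m : ℕ} (h : ResDimLE 𝒳 A (m + 1)) :
    ∃ (K X : C) (f : K ⟶ X) (g : X ⟶ A), IsSES f g ∧ 𝒳 X ∧ ResDimLE 𝒳 K m := by
  obtain ⟨X, d, ε, hmem, hzero, hepi, ⟨w₀, hexact₀⟩, hexact⟩ := h
  refine ⟨kernel ε, X 0, kernel.ι ε, ε, ⟨kernel.condition ε,
    { exact := ShortComplex.exact_of_f_is_kernel _ (kernelIsKernel ε) }⟩, hmem 0 (by omega),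
    fun i => X (i + 1), fun i => d (i + 1), kernel.lift ε (d 0) w₀,
    fun i hi => hmem (i + 1) (by omega), fun i hi => hzero (i + 1) (by omega),
    (ShortComplex.exact_iff_epi_kernel_lift _).1 hexact₀, ?_, fun i => hexact (i + 1)⟩
  obtain ⟨w₁, hexact₁⟩ := hexact 0
  have hz : d 1 ≫ kernel.lift ε (d 0) w₀ = 0 := by
    rw [← cancel_mono (kernel.ι ε)]
    simp [w₁]
  exact ⟨hz, (exact_mk_comp_mono_iff (kernel.ι ε) (kernel.lift_ι ε (d 0) w₀) hz w₁).1
    hexact₁⟩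

lemma IsSES.resDimLE_succ {K X A : C} {f : K ⟶ X} {g : X ⟶ A} (hS : IsSES f g) (hX : 𝒳 X)
    {m : ℕ} (hK : ResDimLE 𝒳 K m) : ResDimLE 𝒳 A (m + 1) := by
  obtain ⟨X', d', ε', hmem, hzero, hepi, ⟨w₀, hexact₀⟩, hexact⟩ := hK
  obtain ⟨wfg, hS⟩ := hS
  have : Mono f := hS.mono_f
  have w : (ε' ≫ f) ≫ g = 0 := by rw [Category.assoc, wfg, comp_zero]
  refine ⟨fun i => Nat.casesOn i X X',
    fun i => Nat.casesOn (motive := fun i =>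
      ((Nat.casesOn (i + 1) X X' : C) ⟶ (Nat.casesOn i X X' : C))) i (ε' ≫ f) d',
    g, ?_, ?_, hS.epi_g, ⟨w, exact_mk_precomp_epi ε' hS.exact w⟩, ?_⟩
  · rintro (_ | i) hi
    exacts [hX, hmem i (by omega)]
  · rintro (_ | i) hi
    exacts [by omega, hzero i (by omega)]
  · rintro (_ | i)
    · have w' : d' 0 ≫ ε' ≫ f = 0 := by rw [← Category.assoc, w₀, zero_comp]
      exact ⟨w', (exact_mk_comp_mono_iff f rfl w₀ w').2 hexact₀⟩
    · exact hexact i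

end Resolutions

variable [HasExt.{w} C]

lemma extZero_of_forall_eq_zero {A B : C} {n : ℕ} (h : ∀ x : Ext A B n, x = 0) :
    extZero A B n :=
  subsingleton_of_forall_eq 0 h

lemma extZero.eq_zero {A B : C} {n : ℕ} (h : extZero A B n) (x : Ext A B n) : x = 0 :=
  @Subsingleton.elim _ h x 0

lemma extZero_of_retract_left {A B Y : C} {n : ℕ} (i : A ⟶ B) (p : B ⟶ A)
    (hip : i ≫ p = 𝟙 A) (h : extZero B Y n) : extZero A Y n :=
  extZero_of_forall_eq_zero fun x => by
    have hx : (Ext.mk₀ i).comp ((Ext.mk₀ p).comp x (zero_add n)) (zero_add n) = x := by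
      rw [Ext.mk₀_comp_mk₀_assoc, hip, Ext.mk₀_id_comp]
    rw [← hx, h.eq_zero ((Ext.mk₀ p).comp x _), Ext.comp_zero]

lemma extZero_of_retract_right {X A B : C} {n : ℕ} (i : A ⟶ B) (p : B ⟶ A)
    (hip : i ≫ p = 𝟙 A) (h : extZero X B n) : extZero X A n :=
  extZero_of_forall_eq_zero fun x => by
    have hx : (x.comp (Ext.mk₀ i) (add_zero n)).comp (Ext.mk₀ p) (add_zero n) = x := by
      rw [Ext.comp_assoc_of_third_deg_zero, Ext.mk₀_comp_mk₀, hip, Ext.comp_mk₀_id]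
    rw [← hx, h.eq_zero (x.comp (Ext.mk₀ i) _), Ext.zero_comp]

namespace IsSES

variable {A B D : C} {f : A ⟶ B} {g : B ⟶ D}

lemma contravariant_extZero₁ (hS : IsSES f g) {Y : C} {n₀ n₁ : ℕ} (h : 1 + n₀ = n₁)
    (h₂ : extZero B Y n₀) (h₃ : extZero D Y n₁) : extZero A Y n₀ := by
  obtain ⟨_, hS⟩ := hS
  refine extZero_of_forall_eq_zero fun x₁ => ?_
  obtain ⟨x₂, rfl⟩ := Ext.contravariant_sequence_exact₁ hS Y x₁ h (h₃.eq_zero _)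
  rw [h₂.eq_zero x₂, Ext.comp_zero]

lemma contravariant_extZero₂ (hS : IsSES f g) {Y : C} {n : ℕ}
    (h₁ : extZero A Y n) (h₃ : extZero D Y n) : extZero B Y n := by
  obtain ⟨_, hS⟩ := hS
  refine extZero_of_forall_eq_zero fun x₂ => ?_
  obtain ⟨x₃, rfl⟩ := Ext.contravariant_sequence_exact₂ hS Y x₂ (h₁.eq_zero _)
  rw [h₃.eq_zero x₃, Ext.comp_zero]

lemma contravariant_extZero₃ (hS : IsSES f g) {Y : C} {n₀ n₁ : ℕ} (h : 1 + n₀ = n₁)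
    (h₁ : extZero A Y n₀) (h₂ : extZero B Y n₁) : extZero D Y n₁ := by
  obtain ⟨_, hS⟩ := hS
  refine extZero_of_forall_eq_zero fun x₃ => ?_
  obtain ⟨x₁, rfl⟩ := Ext.contravariant_sequence_exact₃ hS Y x₃ (h₂.eq_zero _) h
  rw [h₁.eq_zero x₁, Ext.comp_zero]

lemma covariant_extZero₂ (hS : IsSES f g) {X : C} {n : ℕ}
    (h₁ : extZero X A n) (h₃ : extZero X D n) : extZero X B n := by
  obtain ⟨_, hS⟩ := hS
  refine extZero_of_forall_eq_zero fun x₂ => ?_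
  obtain ⟨x₁, rfl⟩ := Ext.covariant_sequence_exact₂ X hS x₂ (h₃.eq_zero _)
  rw [h₁.eq_zero x₁, Ext.zero_comp]

lemma covariant_extZero₃ (hS : IsSES f g) {X : C} {n₀ n₁ : ℕ} (h : n₀ + 1 = n₁)
    (h₂ : extZero X B n₀) (h₁ : extZero X A n₁) : extZero X D n₀ := by
  obtain ⟨_, hS⟩ := hS
  refine extZero_of_forall_eq_zero fun x₃ => ?_
  obtain ⟨x₂, rfl⟩ := Ext.covariant_sequence_exact₃ X hS x₃ h (h₁.eq_zero _)
  rw [h₂.eq_zero x₂, Ext.zero_comp]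

lemma exists_retraction (hS : IsSES f g) (h : extZero D A 1) :
    ∃ r : B ⟶ A, f ≫ r = 𝟙 A := by
  obtain ⟨_, hS⟩ := hS
  obtain ⟨x, hx⟩ :=
    Ext.contravariant_sequence_exact₁ hS A (Ext.mk₀ (𝟙 A)) rfl (h.eq_zero _)
  refine ⟨Ext.homEquiv₀ x, (Ext.mk₀_bijective _ _).1 ?_⟩
  rw [← Ext.mk₀_comp_mk₀, Ext.mk₀_homEquiv₀_apply]
  exact hx

end IsSES

def ExtVanishesAbove (𝒴 : C → Prop) (A : C) (m : ℕ) : Prop :=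
  ∀ B, 𝒴 B → ∀ i, m < i → extZero A B i

lemma ExtVanishesAbove.mono {𝒴 : C → Prop} {A : C} {m k : ℕ} (h : ExtVanishesAbove 𝒴 A m)
    (hmk : m ≤ k) : ExtVanishesAbove 𝒴 A k :=
  fun B hB i hi => h B hB i (by omega)

lemma Hereditary.extVanishesAbove_zero {𝒳 𝒴 : C → Prop} (h : Hereditary 𝒳 𝒴) {A : C}
    (hA : 𝒳 A) : ExtVanishesAbove 𝒴 A 0 :=
  fun B hB i hi => h A B hA hB i hi

namespace IsSES

variable {A B D : C} {f : A ⟶ B} {g : B ⟶ D} {𝒴 : C → Prop} {m : ℕ}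

lemma extVanishesAbove₁ (hS : IsSES f g) (h₂ : ExtVanishesAbove 𝒴 B m)
    (h₃ : ExtVanishesAbove 𝒴 D (m + 1)) : ExtVanishesAbove 𝒴 A m :=
  fun Y hY i hi => hS.contravariant_extZero₁ rfl (h₂ Y hY i hi) (h₃ Y hY (1 + i) (by omega))

lemma extVanishesAbove₂ (hS : IsSES f g) (h₁ : ExtVanishesAbove 𝒴 A m)
    (h₃ : ExtVanishesAbove 𝒴 D m) : ExtVanishesAbove 𝒴 B m :=
  fun Y hY i hi => hS.contravariant_extZero₂ (h₁ Y hY i hi) (h₃ Y hY i hi)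

lemma extVanishesAbove₃ (hS : IsSES f g) (h₁ : ExtVanishesAbove 𝒴 A m)
    (h₂ : ExtVanishesAbove 𝒴 B (m + 1)) : ExtVanishesAbove 𝒴 D (m + 1) := by
  intro Y hY i hi
  obtain ⟨j, rfl⟩ : ∃ j, i = 1 + j := ⟨i - 1, by omega⟩
  exact hS.contravariant_extZero₃ rfl (h₁ Y hY j (by omega)) (h₂ Y hY _ hi)

end IsSES

lemma isThick_exists_extVanishesAbove (𝒴 : C → Prop) :
    IsThick fun A => ∃ m, ExtVanishesAbove 𝒴 A m := by
  refine ⟨?_, ?_, ?_, ?_⟩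
  · rintro A B i p hip ⟨m, hB⟩
    exact ⟨m, fun Y hY k hk => extZero_of_retract_left i p hip (hB Y hY k hk)⟩
  · rintro A B D f g hS ⟨m, hA⟩ ⟨m', hD⟩
    exact ⟨max m m', hS.extVanishesAbove₂ (hA.mono (by omega)) (hD.mono (by omega))⟩
  · rintro A B D f g hS ⟨m, hB⟩ ⟨m', hD⟩
    exact ⟨max m m', hS.extVanishesAbove₁ (hB.mono (by omega)) (hD.mono (by omega))⟩
  · rintro A B D f g hS ⟨m, hA⟩ ⟨m', hB⟩
    exact ⟨max m m' + 1, hS.extVanishesAbove₃ (hA.mono (by omega)) (hB.mono (by omega))⟩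


variable {𝒳 𝒴 : C → Prop}

lemma Hereditary.extVanishesAbove_of_resDimLE (h : Hereditary 𝒳 𝒴) :
    ∀ {m : ℕ} {A : C}, ResDimLE 𝒳 A m → ExtVanishesAbove 𝒴 A m
  | 0, _, hA => by
    obtain ⟨X, hX, ⟨e⟩⟩ := hA.exists_iso_of_zero
    exact fun B hB i hi =>
      extZero_of_retract_left e.inv e.hom e.inv_hom_id (h.extVanishesAbove_zero hX B hB i hi)
  | _ + 1, _, hA => by
    obtain ⟨K, X, f, g, hS, hX, hK⟩ := hA.exists_isSES_of_succ
    exact hS.extVanishesAbove₃ (h.extVanishesAbove_of_resDimLE hK)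
      ((h.extVanishesAbove_zero hX).mono (Nat.zero_le _))

lemma CHCP.resDimLE_of_extVanishesAbove (h : CHCP 𝒳 𝒴) :
    ∀ {m : ℕ} {A : C}, ExtVanishesAbove 𝒴 A m → ResDimLE 𝒳 A m
  | 0, A, hA => resDimLE_zero_of_mem ((h.cotorsion.eqLeft A).2 fun B hB => hA B hB 1 one_pos)
  | m + 1, A, hA => by
    obtain ⟨K, X, f, g, hS, hX, hK⟩ := (h.complete A).1
    exact hS.resDimLE_succ hX (h.resDimLE_of_extVanishesAbove
      (hS.extVanishesAbove₁ ((h.hereditary.extVanishesAbove_zero hX).mono (Nat.zero_le m)) hA))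

lemma CHCP.finResDim_iff (h : CHCP 𝒳 𝒴) (A : C) :
    FinResDim 𝒳 A ↔ ∃ m, ExtVanishesAbove 𝒴 A m :=
  ⟨fun ⟨m, hm⟩ => ⟨m, h.hereditary.extVanishesAbove_of_resDimLE hm⟩,
    fun ⟨m, hm⟩ => ⟨m, h.resDimLE_of_extVanishesAbove hm⟩⟩

namespace CotorsionPair

lemma extZero_one (h : CotorsionPair 𝒳 𝒴) {A B : C} (hA : 𝒳 A) (hB : 𝒴 B) :
    extZero A B 1 :=
  (h.eqRight B).1 hB A hA

lemma right_closedUnderExtensions (h : CotorsionPair 𝒳 𝒴) : ClosedUnderExtensions 𝒴 :=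
  fun _ _ _ _ _ hS hA hD => (h.eqRight _).2 fun _ hX =>
    hS.covariant_extZero₂ (h.extZero_one hX hA) (h.extZero_one hX hD)

lemma right_closedUnderSummands (h : CotorsionPair 𝒳 𝒴) : ClosedUnderSummands 𝒴 :=
  fun _ _ i p hip hB => (h.eqRight _).2 fun _ hX =>
    extZero_of_retract_right i p hip (h.extZero_one hX hB)

lemma right_le_of_left_le {𝒳' 𝒴' : C → Prop} (h : CotorsionPair 𝒳 𝒴)
    (h' : CotorsionPair 𝒳' 𝒴') (hle : ∀ A, 𝒳' A → 𝒳 A) {B : C} (hB : 𝒴 B) :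
    𝒴' B :=
  (h'.eqRight B).2 fun A hA => h.extZero_one (hle A hA) hB

end CotorsionPair

lemma CHCP.mem_left_of_extVanishesAbove (h : CHCP 𝒳 𝒴) {A : C}
    (hA : ExtVanishesAbove (Inter 𝒳 𝒴) A 0) :
    ∀ {m : ℕ}, ExtVanishesAbove 𝒴 A m → 𝒳 A
  | 0, hm => (h.cotorsion.eqLeft A).2 fun B hB => hm B hB 1 one_pos
  | m + 1, hm => by
    refine h.mem_left_of_extVanishesAbove hA (m := m) fun B hB i hi => ?_
    obtain hi | rfl := Nat.lt_or_eq_of_le (Nat.succ_le_of_lt hi)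
    · exact hm B hB i hi
    obtain ⟨B', P, f, g, hS, hP, hB'⟩ := (h.complete B).1
    have hPY : 𝒴 P := h.cotorsion.right_closedUnderExtensions f g hS hB' hB
    exact hS.covariant_extZero₃ rfl (hA P ⟨hP, hPY⟩ _ (by omega)) (hm B' hB' _ (by omega))

lemma CHCP.extVanishesAbove_of_mem_right {Q Rt Qt R : C → Prop} (h : CHCP Q Rt)
    (hcore : ∀ A, Q A → Rt A → Qt A) (h' : Hereditary Qt R) :
    ∀ {k : ℕ} {B : C}, Rt B → ExtVanishesAbove Rt B k → ExtVanishesAbove R B k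
  | 0, B, hB, hk =>
    h'.extVanishesAbove_zero
      (hcore B ((h.cotorsion.eqLeft B).2 fun Y hY => hk Y hY 1 one_pos) hB)
  | k + 1, B, hB, hk => by
    obtain ⟨V, P, f, g, hS, hP, hV⟩ := (h.complete B).1
    have hPRt : Rt P := h.cotorsion.right_closedUnderExtensions f g hS hV hB
    have hVk : ExtVanishesAbove Rt V k :=
      hS.extVanishesAbove₁ ((h.hereditary.extVanishesAbove_zero hP).mono (Nat.zero_le k)) hk
    exact hS.extVanishesAbove₃ (h.extVanishesAbove_of_mem_right hcore h' hV hVk)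
      ((h'.extVanishesAbove_zero (hcore P hP hPRt)).mono (Nat.zero_le _))

/-- Given complete hereditary cotorsion pairs `(Q, R̃)` and
`(Q̃, R)` with `Q̃ ⊆ Q` and `Q ∩ R̃ = Q̃ ∩ R`, if the `Q`-resolution dimension of
all objects is uniformly bounded, then `(Q, W, R)` is a Hovey triple, where `W`
is the class of objects of finite `Q̃`-resolution dimension: `W` is thick,
`Q ∩ W = Q̃` and `W ∩ R = R̃`. -/
theorem statement5 {C : Type u} [Category.{v} C] [Abelian C] [HasExt.{w} C]
    {Q R Qt Rt : C → Prop}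
    (h1 : CHCP Q Rt) (h2 : CHCP Qt R)
    (hsub : ∀ A, Qt A → Q A)
    (hcore : ∀ A, (Q A ∧ Rt A) ↔ (Qt A ∧ R A))
    (hbound : ∃ n, ∀ A : C, ResDimLE Q A n) :
    IsThick (FinResDim Qt) ∧
    (∀ A, (Q A ∧ FinResDim Qt A) ↔ Qt A) ∧
    (∀ A, (FinResDim Qt A ∧ R A) ↔ Rt A) := by
  obtain ⟨n, hn⟩ := hbound
  have hW : ∀ A, FinResDim Qt A ↔ ∃ m, ExtVanishesAbove R A m := h2.finResDim_iff
  have hthick : IsThick (FinResDim Qt) := by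
    rw [show FinResDim Qt = _ from funext fun A => propext (hW A)]
    exact isThick_exists_extVanishesAbove R
  have hQW : ∀ A, (Q A ∧ FinResDim Qt A) ↔ Qt A := by
    refine fun A => ⟨fun ⟨hQ, hA⟩ => ?_, fun hA => ⟨hsub A hA, 0, resDimLE_zero_of_mem hA⟩⟩
    obtain ⟨m, hm⟩ := (hW A).1 hA
    exact h2.mem_left_of_extVanishesAbove
      (fun P hP => h1.hereditary.extVanishesAbove_zero hQ P ((hcore P).2 hP).2) hm
  have hRtW : ∀ B, Rt B → FinResDim Qt B := fun B hB =>
    (hW B).2 ⟨n, h1.extVanishesAbove_of_mem_right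
      (fun A hQ hRt => ((hcore A).1 ⟨hQ, hRt⟩).1)
      h2.hereditary hB (h1.hereditary.extVanishesAbove_of_resDimLE (hn B))⟩
  refine ⟨hthick, hQW, fun B => ⟨fun ⟨hBW, hBR⟩ => ?_, fun hB =>
    ⟨hRtW B hB, h1.cotorsion.right_le_of_left_le h2.cotorsion hsub hB⟩⟩⟩
  obtain ⟨R', Q', f, g, hS, hR', hQ'⟩ := (h1.complete B).2
  have hQ'Qt : Qt Q' := (hQW Q').1 ⟨hQ', hthick.2.2.2 f g hS hBW (hRtW R' hR')⟩
  obtain ⟨r, hr⟩ := hS.exists_retraction (h2.cotorsion.extZero_one hQ'Qt hBR)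
  exact h1.cotorsion.right_closedUnderSummands f r hr hR'

end PaperAB
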